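/- Population-level TBRM guarantee (deterministic core of the main theorem): Suppose the MDP is deterministic, let μ be any policy whose step-wise occupancy measures have full support (d_h^μ(s,a) > 0 for all 1 ≤ h ≤ H, s ∈ S_h, a ∈ A), let Q = (Q_h)_{h=1}^H with Q_h : S_h × A → ℝ be arbitrary, and let π̂ := π_Q be its softmax policy. Then for every policy π† (in particular any maximizer π* of J_β over policies), J_β(π†) − J_β(π̂) ≤ 2β · max over π ∈ {π†, π̂} of √( (1 + Σ_{h=1}^H χ²(d_h^π ‖ d_h^μ)) · E_μ[ f_Q(τ)² ] ). -/

import Mathlib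

/-!
Writing `R` for the shifted rewards, `f_Q = V_{Q,1}(s₁) + Σ_h log π̂_h(a_h|s_h) − Σ_h R_h(s_h,a_h)`,
so for every policy `π`, `J_β(π)/β = E_ρ V_{Q,1} − E_π f_Q − Σ_h E_π KL(π_h(·|s_h) ‖ π̂_h(·|s_h))`.
The KL terms vanish for `π̂` and are nonnegative otherwise, hence
`J_β(π†) − J_β(π̂) ≤ β (E_π̂ f_Q − E_π† f_Q)`.

Along admissible trajectories `f_Q = Σ_h δ_h(s_h,a_h)` with `δ = Q − T_β Q`. Such an additive
functional splits as `V^μ_1(s₁) + Σ_h A^μ_h(s_h,a_h)`, where `V^μ`, `A^μ` are the value and advantage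
functions of `μ` for the rewards `δ`; each `A^μ_h` has mean zero under `μ` given the past. Hence
`E_π f = E_ρ V^μ_1 + Σ_h ⟨d^π_h − d^μ_h, A^μ_h⟩` and `E_μ f² = E_ρ (V^μ_1)² + Σ_h ⟨d^μ_h, (A^μ_h)²⟩`,
and Cauchy–Schwarz, first weighted by `d^μ_h` and then over `h`, gives
`|E_π f| ≤ √((1 + Σ_h χ²(d^π_h ‖ d^μ_h)) · E_μ f²)`.
-/

open Finset

namespace TBRM

/-- `p` is a probability mass function on a finite type. -/
def IsPMF {X : Type*} [Fintype X] (p : X → ℝ) : Prop :=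
  (∀ x, 0 ≤ p x) ∧ ∑ x, p x = 1

/-- χ²-divergence between pmfs on a finite type. -/
noncomputable def chiSq {X : Type*} [Fintype X] (p q : X → ℝ) : ℝ :=
  (∑ x, p x ^ 2 / q x) - 1

variable {H : ℕ} {S : Fin (H + 1) → Type*} {A : Type*}
variable [∀ i, Fintype (S i)] [∀ i, DecidableEq (S i)] [Fintype A] [DecidableEq A]

/-- Density of a full trajectory (including the extra final state `s_{H+1}`),
under initial distribution `ρ`, transition kernels `P`, and policy `π`. -/
noncomputable def trajDensity (ρ : S 0 → ℝ)
    (P : ∀ h : Fin H, S h.castSucc → A → S h.succ → ℝ)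
    (π : ∀ h : Fin H, S h.castSucc → A → ℝ)
    (s : ∀ i : Fin (H + 1), S i) (a : Fin H → A) : ℝ :=
  ρ (s 0) * ∏ h : Fin H, (π h (s h.castSucc) (a h) * P h (s h.castSucc) (a h) (s h.succ))

/-- Expectation of a trajectory functional under policy `π`. -/
noncomputable def expTraj (ρ : S 0 → ℝ)
    (P : ∀ h : Fin H, S h.castSucc → A → S h.succ → ℝ)
    (π : ∀ h : Fin H, S h.castSucc → A → ℝ)
    (f : (∀ i : Fin (H + 1), S i) → (Fin H → A) → ℝ) : ℝ :=
  ∑ s : ∀ i : Fin (H + 1), S i, ∑ a : Fin H → A, trajDensity ρ P π s a * f s a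

/-- Step-`h` occupancy measure `d_h^π(x,b)`. -/
noncomputable def occ (ρ : S 0 → ℝ)
    (P : ∀ h : Fin H, S h.castSucc → A → S h.succ → ℝ)
    (π : ∀ h : Fin H, S h.castSucc → A → ℝ)
    (h : Fin H) (x : S h.castSucc) (b : A) : ℝ :=
  expTraj ρ P π (fun s a => if s h.castSucc = x ∧ a h = b then 1 else 0)


/-- Shifted reward `R_h(s,a) := r_h(s,a)/β + log πref_h(a|s)`. -/
noncomputable def shiftedR (πref : ∀ h : Fin H, S h.castSucc → A → ℝ)
    (r : ∀ h : Fin H, S h.castSucc → A → ℝ) (β : ℝ)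
    (h : Fin H) (s : S h.castSucc) (a : A) : ℝ :=
  r h s a / β + Real.log (πref h s a)

/-- The soft value function of `Q`: `V_{Q,h}(s) = log Σ_a exp(Q_h(s,a))` on layers
`1, …, H`, and `V_{Q,H+1} ≡ 0` on the last layer. -/
noncomputable def VQ (Q : ∀ h : Fin H, S h.castSucc → A → ℝ) :
    ∀ i : Fin (H + 1), S i → ℝ :=
  Fin.lastCases (fun _ => 0)
    (fun h s => Real.log (∑ a : A, Real.exp (Q h s a)))

/-- Point-mass transition kernels of a deterministic MDP. -/
noncomputable def detKernel (Pd : ∀ h : Fin H, S h.castSucc → A → S h.succ) :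
    ∀ h : Fin H, S h.castSucc → A → S h.succ → ℝ :=
  fun h s a s' => if s' = Pd h s a then 1 else 0

/-- The soft Bellman optimality operator for deterministic transitions:
`(T_β Q)_h(s,a) := R_h(s,a) + V_{Q,h+1}(P_h(s,a))`. -/
noncomputable def ToptDet (Pd : ∀ h : Fin H, S h.castSucc → A → S h.succ)
    (πref : ∀ h : Fin H, S h.castSucc → A → ℝ)
    (r : ∀ h : Fin H, S h.castSucc → A → ℝ) (β : ℝ)
    (Q : ∀ h : Fin H, S h.castSucc → A → ℝ)
    (h : Fin H) (s : S h.castSucc) (b : A) : ℝ :=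
  shiftedR πref r β h s b + VQ Q h.succ (Pd h s b)

/-- The trajectory Bellman residual
`f_Q(τ) := Q_1(s_1,a_1) − Σ_{h=1}^H R_h(s_h,a_h) + Σ_{h=2}^H (Q_h(s_h,a_h) − V_{Q,h}(s_h))`
of a trajectory `τ = (s_1,a_1,…,s_H,a_H)`. -/
noncomputable def trajResidual (hH : 0 < H)
    (πref : ∀ h : Fin H, S h.castSucc → A → ℝ)
    (r : ∀ h : Fin H, S h.castSucc → A → ℝ) (β : ℝ)
    (Q : ∀ h : Fin H, S h.castSucc → A → ℝ)
    (s : ∀ h : Fin H, S h.castSucc) (a : Fin H → A) : ℝ :=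
  Q ⟨0, hH⟩ (s ⟨0, hH⟩) (a ⟨0, hH⟩)
    - ∑ h : Fin H, shiftedR πref r β h (s h) (a h)
    + ∑ h : Fin H,
        (if h = ⟨0, hH⟩ then 0 else Q h (s h) (a h) - VQ Q h.castSucc (s h))

/-- KL-regularized return `J_β(π)` relative to a reference policy `πref`. -/
noncomputable def KLret (ρ : S 0 → ℝ)
    (P : ∀ h : Fin H, S h.castSucc → A → S h.succ → ℝ)
    (πref : ∀ h : Fin H, S h.castSucc → A → ℝ)
    (r : ∀ h : Fin H, S h.castSucc → A → ℝ) (β : ℝ)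
    (π : ∀ h : Fin H, S h.castSucc → A → ℝ) : ℝ :=
  expTraj ρ P π (fun s a => ∑ h : Fin H,
    (r h (s h.castSucc) (a h)
      - β * Real.log (π h (s h.castSucc) (a h) / πref h (s h.castSucc) (a h))))

/-- The softmax policy of `Q`: `π_{Q,h}(a|s) := exp(Q_h(s,a) − V_{Q,h}(s))`. -/
noncomputable def softmaxPolicy (Q : ∀ h : Fin H, S h.castSucc → A → ℝ)
    (h : Fin H) (s : S h.castSucc) (a : A) : ℝ :=
  Real.exp (Q h s a - VQ Q h.castSucc s)

set_option linter.unusedSectionVars false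

def DependsOnFirst {α β : Sort*} {n : ℕ} (k : ℕ) (g : (Fin n → α) → β) : Prop :=
  ∀ a a' : Fin n → α, (∀ j : Fin n, (j : ℕ) < k → a j = a' j) → g a = g a'

/-- `c h a` plays the role of the conditional probability of `a h` given `a 0, …, a (h - 1)`,
so that `∏ h, c h a` is the probability of the whole sequence `a`. -/
structure IsCausalKernel {α : Type*} [Fintype α] [DecidableEq α] {n : ℕ}
    (c : Fin n → (Fin n → α) → ℝ) : Prop where
  dependsOnFirst : ∀ h : Fin n, DependsOnFirst (h + 1) (c h)
  sum_update : ∀ (h : Fin n) (a : Fin n → α), ∑ b, c h (Function.update a h b) = 1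

section CausalKernel

variable {α : Type*} {n : ℕ}

lemma DependsOnFirst.comp_snoc {β : Sort*} {k : ℕ} {g : (Fin (n + 1) → α) → β}
    (hg : DependsOnFirst k g) (b : α) :
    DependsOnFirst k fun a : Fin n → α => g (Fin.snoc a b) :=
  fun a a' haa' => hg _ _ fun j hj => by
    cases j using Fin.lastCases with
    | last => simp
    | cast j => simpa using haa' j hj

lemma DependsOnFirst.snoc_eq {β : Sort*} {g : (Fin (n + 1) → α) → β}
    (hg : DependsOnFirst n g) (a : Fin n → α) (b b' : α) :
    g (Fin.snoc a b) = g (Fin.snoc a b') :=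
  hg _ _ fun j hj => by
    obtain ⟨j, rfl⟩ : ∃ i : Fin n, i.castSucc = j := ⟨⟨j, hj⟩, rfl⟩
    simp

lemma DependsOnFirst.mono {β : Sort*} {k m : ℕ} {g : (Fin n → α) → β}
    (hg : DependsOnFirst k g) (hkm : k ≤ m) : DependsOnFirst m g :=
  fun a a' haa' => hg a a' fun j hj => haa' j (by omega)

lemma DependsOnFirst.update_eq [DecidableEq α] {β : Sort*} {k : ℕ} {g : (Fin n → α) → β}
    (hg : DependsOnFirst k g) {j : Fin n} (hj : k ≤ j) (a : Fin n → α) (b : α) :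
    g (Function.update a j b) = g a :=
  hg _ _ fun i hi => Function.update_of_ne (Fin.ne_of_lt (by omega)) _ _

lemma sum_fin_succ_pi_eq_sum_snoc [Fintype α] {M : Type*} [AddCommMonoid M]
    (F : (Fin (n + 1) → α) → M) :
    ∑ a, F a = ∑ a : Fin n → α, ∑ b, F (Fin.snoc a b) := by
  rw [← (Fin.snocEquiv fun _ => α).sum_comp, Fintype.sum_prod_type, Finset.sum_comm]
  rfl

variable [Fintype α] [DecidableEq α]

namespace IsCausalKernel

variable {c : Fin (n + 1) → (Fin (n + 1) → α) → ℝ}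

lemma restrict (hc : IsCausalKernel c) (z : α) :
    IsCausalKernel fun (h : Fin n) (a : Fin n → α) => c h.castSucc (Fin.snoc a z) where
  dependsOnFirst h := (hc.dependsOnFirst h.castSucc).comp_snoc z
  sum_update h a := by simpa [Fin.snoc_update] using hc.sum_update h.castSucc (Fin.snoc a z)

lemma prod_snoc (hc : IsCausalKernel c) (z : α) (a : Fin n → α) (b : α) :
    ∏ h, c h (Fin.snoc a b) =
      (∏ h : Fin n, c h.castSucc (Fin.snoc a z)) * c (Fin.last n) (Fin.snoc a b) := by
  rw [Fin.prod_univ_castSucc]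
  congr 1
  refine Finset.prod_congr rfl fun h _ => ?_
  exact ((hc.dependsOnFirst h.castSucc).mono (by simp)).snoc_eq a b z

variable [Nonempty α]

lemma sum_snoc_last (hc : IsCausalKernel c) (a : Fin n → α) :
    ∑ b, c (Fin.last n) (Fin.snoc a b) = 1 := by
  obtain ⟨z⟩ := ‹Nonempty α›
  simpa [Fin.update_snoc_last] using hc.sum_update (Fin.last n) (Fin.snoc a z)

lemma sum_prod_mul_of_dependsOnFirst (hc : IsCausalKernel c) (z : α)
    {g : (Fin (n + 1) → α) → ℝ} (hg : DependsOnFirst n g) :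
    ∑ a, (∏ h, c h a) * g a =
      ∑ a : Fin n → α, (∏ h : Fin n, c h.castSucc (Fin.snoc a z)) * g (Fin.snoc a z) := by
  rw [sum_fin_succ_pi_eq_sum_snoc]
  refine Finset.sum_congr rfl fun a _ => ?_
  simp_rw [hc.prod_snoc z a, hg.snoc_eq a _ z, mul_right_comm _ _ (g _), ← Finset.mul_sum,
    hc.sum_snoc_last, mul_one]

end IsCausalKernel

lemma IsCausalKernel.dependsOnFirst_condMean {c : Fin n → (Fin n → α) → ℝ}
    (hc : IsCausalKernel c) (k : Fin n) {g : (Fin n → α) → ℝ}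
    (hg : DependsOnFirst (k + 1) g) :
    DependsOnFirst (k + 1) fun a =>
      ∑ b, c k (Function.update a k b) * g (Function.update a k b) :=
  fun a a' haa' => Finset.sum_congr rfl fun b _ => by
    have key : ∀ j : Fin n, (j : ℕ) < k + 1 →
        Function.update a k b j = Function.update a' k b j := fun j hj => by
      rcases eq_or_ne j k with rfl | hjk
      · simp
      · simp [hjk, haa' j hj]
    rw [hc.dependsOnFirst k _ _ key, hg _ _ key]

variable [Nonempty α]

theorem IsCausalKernel.sum_prod_eq_one :
    ∀ {n : ℕ} {c : Fin n → (Fin n → α) → ℝ}, IsCausalKernel c →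
      ∑ a, ∏ h, c h a = 1
  | 0, _, _ => by simp
  | n + 1, c, hc => by
    obtain ⟨z⟩ := ‹Nonempty α›
    have := hc.sum_prod_mul_of_dependsOnFirst z (g := fun _ => 1) fun _ _ _ => rfl
    simp only [mul_one] at this
    rw [this, (hc.restrict z).sum_prod_eq_one]

/-- The tower property: conditioning on `a 0, …, a (k - 1)` replaces `g` by its conditional
mean over `a k`. -/
theorem IsCausalKernel.sum_prod_mul_eq :
    ∀ {n : ℕ} {c : Fin n → (Fin n → α) → ℝ}, IsCausalKernel c → ∀ (k : Fin n)
      {g : (Fin n → α) → ℝ}, DependsOnFirst (k + 1) g →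
      ∑ a, (∏ h, c h a) * g a =
        ∑ a, (∏ h, c h a) * ∑ b, c k (Function.update a k b) * g (Function.update a k b)
  | 0, _, _, k, _, _ => k.elim0
  | n + 1, c, hc, k, g, hg => by
    obtain ⟨z⟩ := ‹Nonempty α›
    cases k using Fin.lastCases with
    | last =>
      rw [sum_fin_succ_pi_eq_sum_snoc, sum_fin_succ_pi_eq_sum_snoc]
      refine Finset.sum_congr rfl fun a _ => ?_
      simp_rw [hc.prod_snoc z a, Fin.update_snoc_last, mul_assoc, ← Finset.mul_sum,
        ← Finset.sum_mul, hc.sum_snoc_last, one_mul]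
    | cast j =>
      have hj : (j.castSucc : ℕ) + 1 ≤ n := by simp
      rw [hc.sum_prod_mul_of_dependsOnFirst z (hg.mono hj),
        hc.sum_prod_mul_of_dependsOnFirst z ((hc.dependsOnFirst_condMean _ hg).mono hj)]
      simpa [Fin.snoc_update] using (hc.restrict z).sum_prod_mul_eq j (hg.comp_snoc z)

end CausalKernel

section Expectation

variable {ρ : S 0 → ℝ} {P : ∀ h : Fin H, S h.castSucc → A → S h.succ → ℝ}
  {π : ∀ h : Fin H, S h.castSucc → A → ℝ}

lemma expTraj_congr {f g : (∀ i, S i) → (Fin H → A) → ℝ}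
    (hfg : ∀ s a, trajDensity ρ P π s a ≠ 0 → f s a = g s a) :
    expTraj ρ P π f = expTraj ρ P π g := by
  refine Finset.sum_congr rfl fun s _ => Finset.sum_congr rfl fun a _ => ?_
  by_cases hs : trajDensity ρ P π s a = 0
  · simp [hs]
  · rw [hfg s a hs]

lemma expTraj_add (f g : (∀ i, S i) → (Fin H → A) → ℝ) :
    expTraj ρ P π (fun s a => f s a + g s a) = expTraj ρ P π f + expTraj ρ P π g := by
  simp only [expTraj, mul_add, Finset.sum_add_distrib]

lemma expTraj_sub (f g : (∀ i, S i) → (Fin H → A) → ℝ) :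
    expTraj ρ P π (fun s a => f s a - g s a) = expTraj ρ P π f - expTraj ρ P π g := by
  simp only [expTraj, mul_sub, Finset.sum_sub_distrib]

lemma expTraj_const_mul (c : ℝ) (f : (∀ i, S i) → (Fin H → A) → ℝ) :
    expTraj ρ P π (fun s a => c * f s a) = c * expTraj ρ P π f := by
  simp only [expTraj, Finset.mul_sum, mul_left_comm c]

lemma expTraj_sum {ι : Type*} (t : Finset ι) (f : ι → (∀ i, S i) → (Fin H → A) → ℝ) :
    expTraj ρ P π (fun s a => ∑ i ∈ t, f i s a) = ∑ i ∈ t, expTraj ρ P π (f i) := by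
  simp only [expTraj, Finset.mul_sum]
  conv_lhs => enter [2, s]; rw [Finset.sum_comm]
  exact Finset.sum_comm

lemma expTraj_mono (hρ : ∀ x, 0 ≤ ρ x) (hπ : ∀ h x b, 0 ≤ π h x b)
    (hP : ∀ h x b y, 0 ≤ P h x b y) {f g : (∀ i, S i) → (Fin H → A) → ℝ}
    (hfg : ∀ s a, f s a ≤ g s a) : expTraj ρ P π f ≤ expTraj ρ P π g :=
  Finset.sum_le_sum fun s _ => Finset.sum_le_sum fun a _ =>
    mul_le_mul_of_nonneg_left (hfg s a) <| mul_nonneg (hρ _) <|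
      Finset.prod_nonneg fun _ _ => mul_nonneg (hπ _ _ _) (hP _ _ _ _)

lemma policy_ne_zero_of_trajDensity_ne_zero {s : ∀ i, S i} {a : Fin H → A}
    (hs : trajDensity ρ P π s a ≠ 0) (h : Fin H) : π h (s h.castSucc) (a h) ≠ 0 :=
  left_ne_zero_of_mul <| Finset.prod_ne_zero_iff.mp (right_ne_zero_of_mul hs) h (mem_univ h)

lemma sum_occ_mul (k : Fin H) (ψ : S k.castSucc → A → ℝ) :
    ∑ x : S k.castSucc × A, occ ρ P π k x.1 x.2 * ψ x.1 x.2 =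
      expTraj ρ P π (fun s a => ψ (s k.castSucc) (a k)) := by
  simp_rw [occ, mul_comm (expTraj _ _ _ _), ← expTraj_const_mul]
  rw [← expTraj_sum]
  congr 1
  ext s a
  simp [Fintype.sum_prod_type, ite_and]

end Expectation

section Deterministic

variable (Pd : ∀ h : Fin H, S h.castSucc → A → S h.succ)

noncomputable def rollout (s₁ : S 0) (a : Fin H → A) : ∀ i : Fin (H + 1), S i :=
  fun i => Fin.induction s₁ (fun h x => Pd h x (a h)) i

@[simp] lemma rollout_zero (s₁ : S 0) (a : Fin H → A) : rollout Pd s₁ a 0 = s₁ := rfl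

lemma rollout_succ (s₁ : S 0) (a : Fin H → A) (h : Fin H) :
    rollout Pd s₁ a h.succ = Pd h (rollout Pd s₁ a h.castSucc) (a h) := by
  simp [rollout]

lemma dependsOnFirst_rollout (s₁ : S 0) (i : Fin (H + 1)) :
    DependsOnFirst i fun a => rollout Pd s₁ a i := by
  intro a a' haa'
  induction i using Fin.induction with
  | zero => rfl
  | succ h ih =>
    simp only at ih ⊢
    rw [rollout_succ, rollout_succ, ih fun j hj => haa' j (by simp at hj ⊢; omega),
      haa' h (by simp)]

abbrev IsAdmissible (s : ∀ i, S i) (a : Fin H → A) : Prop :=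
  ∀ h : Fin H, s h.succ = Pd h (s h.castSucc) (a h)

lemma eq_rollout_iff {s : ∀ i, S i} {a : Fin H → A} :
    s = rollout Pd (s 0) a ↔ IsAdmissible Pd s a := by
  refine ⟨fun hs h => ?_, fun hadm => funext fun i => ?_⟩
  · rw [hs, rollout_succ, ← hs]
  · induction i using Fin.induction with
    | zero => rfl
    | succ h ih => rw [rollout_succ, ← ih, hadm]

lemma trajDensity_detKernel (ρ : S 0 → ℝ) (π : ∀ h : Fin H, S h.castSucc → A → ℝ)
    (s : ∀ i, S i) (a : Fin H → A) :
    trajDensity ρ (detKernel Pd) π s a =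
      if s = rollout Pd (s 0) a then ρ (s 0) * ∏ h, π h (s h.castSucc) (a h) else 0 := by
  simp only [trajDensity, detKernel, mul_ite, mul_one, mul_zero, Finset.prod_ite_zero,
    Finset.mem_univ, forall_const, eq_rollout_iff]

lemma isAdmissible_of_trajDensity_ne_zero {ρ : S 0 → ℝ}
    {π : ∀ h : Fin H, S h.castSucc → A → ℝ} {s : ∀ i, S i} {a : Fin H → A}
    (hs : trajDensity ρ (detKernel Pd) π s a ≠ 0) : IsAdmissible Pd s a := by
  rw [trajDensity_detKernel] at hs
  exact (eq_rollout_iff Pd).mp (not_not.mp fun h => hs (if_neg h))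

noncomputable def policyKernel (π : ∀ h : Fin H, S h.castSucc → A → ℝ) (s₁ : S 0) :
    Fin H → (Fin H → A) → ℝ :=
  fun h a => π h (rollout Pd s₁ a h.castSucc) (a h)

lemma isCausalKernel_policyKernel {π : ∀ h : Fin H, S h.castSucc → A → ℝ}
    (hπ : ∀ h x, ∑ b, π h x b = 1) (s₁ : S 0) :
    IsCausalKernel (policyKernel Pd π s₁) where
  dependsOnFirst h a a' haa' :=
    congrArg₂ (π h)
      (dependsOnFirst_rollout Pd s₁ h.castSucc a a' fun j hj => haa' j (by simp at hj ⊢; omega))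
      (haa' h (by simp))
  sum_update h a := by
    simp only [policyKernel, Function.update_self,
      (dependsOnFirst_rollout Pd s₁ h.castSucc).update_eq le_rfl, hπ]

lemma sum_ite_eq_rollout (a : Fin H → A) (X : (∀ i, S i) → ℝ) :
    ∑ s : ∀ i, S i, (if s = rollout Pd (s 0) a then X s else 0) =
      ∑ s₁, X (rollout Pd s₁ a) := by
  rw [← Finset.sum_filter]
  exact Finset.sum_nbij' (fun s => s 0) (fun s₁ => rollout Pd s₁ a) (by simp) (by simp)
    (fun s hs => ((Finset.mem_filter.mp hs).2).symm) (by simp) (fun s hs => by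
      rw [← (Finset.mem_filter.mp hs).2])

lemma expTraj_detKernel (ρ : S 0 → ℝ) (π : ∀ h : Fin H, S h.castSucc → A → ℝ)
    (f : (∀ i, S i) → (Fin H → A) → ℝ) :
    expTraj ρ (detKernel Pd) π f =
      ∑ s₁, ρ s₁ *
        ∑ a, (∏ h, policyKernel Pd π s₁ h a) * f (rollout Pd s₁ a) a := by
  simp only [expTraj, trajDensity_detKernel, ite_mul, zero_mul, Finset.mul_sum]
  rw [Finset.sum_comm, Finset.sum_comm (γ := S 0)]
  refine Finset.sum_congr rfl fun a _ => ?_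
  rw [sum_ite_eq_rollout]
  simp [policyKernel, mul_assoc]

end Deterministic

section DeterministicExpectation

variable {Pd : ∀ h : Fin H, S h.castSucc → A → S h.succ} {ρ : S 0 → ℝ}
  {π : ∀ h : Fin H, S h.castSucc → A → ℝ} [Nonempty A]

lemma expTraj_detKernel_comp_zero (hπ : ∀ h x, ∑ b, π h x b = 1) (φ : S 0 → ℝ) :
    expTraj ρ (detKernel Pd) π (fun s _ => φ (s 0)) = ∑ x, ρ x * φ x := by
  simp [expTraj_detKernel, ← Finset.sum_mul,
    (isCausalKernel_policyKernel Pd hπ _).sum_prod_eq_one]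

theorem expTraj_detKernel_mul_step (hπ : ∀ h x, ∑ b, π h x b = 1) (k : Fin H)
    {f : (∀ i, S i) → (Fin H → A) → ℝ}
    (hf : ∀ s₁, DependsOnFirst k fun a => f (rollout Pd s₁ a) a)
    (ψ : S k.castSucc → A → ℝ) :
    expTraj ρ (detKernel Pd) π (fun s a => f s a * ψ (s k.castSucc) (a k)) =
      expTraj ρ (detKernel Pd) π
        (fun s a => f s a * ∑ b, π k (s k.castSucc) b * ψ (s k.castSucc) b) := by
  simp only [expTraj_detKernel]
  refine Finset.sum_congr rfl fun s₁ _ => congrArg _ ?_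
  have hroll := dependsOnFirst_rollout Pd s₁ k.castSucc
  rw [(isCausalKernel_policyKernel Pd hπ s₁).sum_prod_mul_eq k
    (g := fun a => f (rollout Pd s₁ a) a * ψ (rollout Pd s₁ a k.castSucc) (a k))]
  · refine Finset.sum_congr rfl fun a _ => congrArg _ ?_
    have hfa := fun b => (hf s₁).update_eq le_rfl a b
    simp only [policyKernel, Function.update_self, hroll.update_eq le_rfl, hfa, Finset.mul_sum]
    exact Finset.sum_congr rfl fun b _ => mul_left_comm _ _ _
  · intro a a' haa'
    have hfa := (hf s₁) a a' fun j hj => haa' j (by omega)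
    simp only at hfa ⊢
    rw [hfa]
    exact congrArg _ <| congrArg₂ ψ (hroll a a' fun j hj => haa' j (by simp at hj ⊢; omega))
      (haa' k (by simp))

lemma expTraj_detKernel_mul_step_eq_zero (hπ : ∀ h x, ∑ b, π h x b = 1) (k : Fin H)
    {f : (∀ i, S i) → (Fin H → A) → ℝ}
    (hf : ∀ s₁, DependsOnFirst k fun a => f (rollout Pd s₁ a) a)
    {ψ : S k.castSucc → A → ℝ} (hψ : ∀ x, ∑ b, π k x b * ψ x b = 0) :
    expTraj ρ (detKernel Pd) π (fun s a => f s a * ψ (s k.castSucc) (a k)) = 0 := by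
  rw [expTraj_detKernel_mul_step hπ k hf]
  simp [hψ, expTraj]

lemma expTraj_detKernel_congr {f g : (∀ i, S i) → (Fin H → A) → ℝ}
    (hfg : ∀ s a, IsAdmissible Pd s a → f s a = g s a) :
    expTraj ρ (detKernel Pd) π f = expTraj ρ (detKernel Pd) π g :=
  expTraj_congr fun s a hs => hfg s a (isAdmissible_of_trajDensity_ne_zero Pd hs)

lemma expTraj_detKernel_step_nonpos (hρ : ∀ x, 0 ≤ ρ x) (hπ : ∀ h x, IsPMF (π h x))
    (k : Fin H) {ψ : S k.castSucc → A → ℝ} (hψ : ∀ x, ∑ b, π k x b * ψ x b ≤ 0) :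
    expTraj ρ (detKernel Pd) π (fun s a => ψ (s k.castSucc) (a k)) ≤ 0 := by
  have hdetKernel : ∀ h x b y, 0 ≤ detKernel Pd h x b y := fun h x b y => by
    unfold detKernel; split_ifs <;> norm_num
  calc expTraj ρ (detKernel Pd) π (fun s a => ψ (s k.castSucc) (a k))
      = expTraj ρ (detKernel Pd) π (fun s a => 1 * ψ (s k.castSucc) (a k)) := by simp
    _ = expTraj ρ (detKernel Pd) π
          (fun s a => 1 * ∑ b, π k (s k.castSucc) b * ψ (s k.castSucc) b) :=
        expTraj_detKernel_mul_step (fun h x => (hπ h x).2) k (fun _ _ _ _ => rfl) ψ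
    _ ≤ expTraj ρ (detKernel Pd) π (fun _ _ => 0) :=
        expTraj_mono hρ (fun h x => (hπ h x).1) hdetKernel fun s _ => by simpa using hψ _
    _ = 0 := by simp [expTraj]

lemma sum_occ_detKernel_eq_one (hρ : ∑ x, ρ x = 1) (hπ : ∀ h x, ∑ b, π h x b = 1)
    (k : Fin H) :
    ∑ x : S k.castSucc × A, occ ρ (detKernel Pd) π k x.1 x.2 = 1 := by
  simpa [hρ, expTraj_detKernel_comp_zero hπ (fun _ => 1)] using
    sum_occ_mul (ρ := ρ) (P := detKernel Pd) (π := π) k fun _ _ => 1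

end DeterministicExpectation

section Inequalities

variable {X : Type*} [Fintype X]

lemma chiSq_eq_sum_sq_sub_div {p q : X → ℝ} (hq : ∀ x, 0 < q x) (hp1 : ∑ x, p x = 1)
    (hq1 : ∑ x, q x = 1) : chiSq p q = ∑ x, (p x - q x) ^ 2 / q x := by
  have hterm : ∀ x, (p x - q x) ^ 2 / q x = p x ^ 2 / q x - 2 * p x + q x := fun x => by
    field_simp [(hq x).ne']
    ring
  simp only [chiSq, hterm, Finset.sum_add_distrib, Finset.sum_sub_distrib, ← Finset.mul_sum,
    hp1, hq1]
  ring

lemma chiSq_nonneg {p q : X → ℝ} (hq : ∀ x, 0 < q x) (hp1 : ∑ x, p x = 1)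
    (hq1 : ∑ x, q x = 1) : 0 ≤ chiSq p q := by
  rw [chiSq_eq_sum_sq_sub_div hq hp1 hq1]
  exact Finset.sum_nonneg fun x _ => div_nonneg (sq_nonneg _) (hq x).le

lemma abs_sum_mul_le_sqrt {p g : X → ℝ} (hp0 : ∀ x, 0 ≤ p x) (hp1 : ∑ x, p x = 1) :
    |∑ x, p x * g x| ≤ √(∑ x, p x * g x ^ 2) := by
  refine Real.abs_le_sqrt ?_
  simpa [hp1] using Finset.sum_sq_le_sum_mul_sum_of_sq_le_mul (r := fun x => p x * g x) univ
    (fun x _ => hp0 x) (fun x _ => mul_nonneg (hp0 x) (sq_nonneg (g x)))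
    fun x _ => le_of_eq (by ring)

lemma abs_sum_sub_mul_le {p q g : X → ℝ} (hq : ∀ x, 0 < q x) (hp1 : ∑ x, p x = 1)
    (hq1 : ∑ x, q x = 1) :
    |∑ x, (p x - q x) * g x| ≤ √(chiSq p q) * √(∑ x, q x * g x ^ 2) := by
  rw [← Real.sqrt_mul (chiSq_nonneg hq hp1 hq1), chiSq_eq_sum_sq_sub_div hq hp1 hq1]
  refine Real.abs_le_sqrt <| Finset.sum_sq_le_sum_mul_sum_of_sq_le_mul univ
    (fun x _ => div_nonneg (sq_nonneg _) (hq x).le)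
    (fun x _ => mul_nonneg (hq x).le (sq_nonneg (g x))) fun x _ => le_of_eq ?_
  field_simp [(hq x).ne']

lemma add_sum_mul_le_sqrt_mul_sqrt {ι : Type*} [Fintype ι] (x₀ y₀ : ℝ) (x y : ι → ℝ) :
    x₀ * y₀ + ∑ i, x i * y i ≤
      √(x₀ ^ 2 + ∑ i, x i ^ 2) * √(y₀ ^ 2 + ∑ i, y i ^ 2) := by
  simpa [Fintype.sum_option] using Real.sum_mul_le_sqrt_mul_sqrt univ
    (fun i : Option ι => i.elim x₀ x) (fun i => i.elim y₀ y)

lemma sum_mul_log_sub_log_nonpos {p q : X → ℝ} (hp : ∀ x, 0 ≤ p x) (hq : ∀ x, 0 < q x)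
    (hpq : ∑ x, q x ≤ ∑ x, p x) : ∑ x, p x * (Real.log (q x) - Real.log (p x)) ≤ 0 := by
  have hterm : ∀ x, p x * (Real.log (q x) - Real.log (p x)) ≤ q x - p x := fun x => by
    rcases (hp x).eq_or_lt with h0 | hpos
    · simp [← h0, (hq x).le]
    rw [← Real.log_div (hq x).ne' hpos.ne']
    calc p x * Real.log (q x / p x) ≤ p x * (q x / p x - 1) :=
          mul_le_mul_of_nonneg_left (Real.log_le_sub_one_of_pos (div_pos (hq x) hpos)) hpos.le
      _ = q x - p x := by field_simp
  calc ∑ x, p x * (Real.log (q x) - Real.log (p x)) ≤ ∑ x, (q x - p x) :=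
        Finset.sum_le_sum fun x _ => hterm x
    _ ≤ 0 := by rw [Finset.sum_sub_distrib]; linarith

lemma sub_le_two_mul_max_of_abs_le {a b x y : ℝ} (ha : |a| ≤ y) (hb : |b| ≤ x) :
    a - b ≤ 2 * max x y := by
  linarith [le_abs_self a, neg_abs_le b, le_max_left x y, le_max_right x y]

end Inequalities

lemma sum_succ_sub_castSucc {M : Type*} [AddCommGroup M] {n : ℕ} (F : Fin (n + 1) → M) :
    ∑ h : Fin n, (F h.succ - F h.castSucc) = F (Fin.last n) - F 0 := by
  rw [Finset.sum_sub_distrib, eq_sub_of_add_eq' (Fin.sum_univ_succ F).symm,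
    eq_sub_of_add_eq (Fin.sum_univ_castSucc F).symm]
  abel

section Advantage

variable (Pd : ∀ h : Fin H, S h.castSucc → A → S h.succ)
  (μ δ : ∀ h : Fin H, S h.castSucc → A → ℝ)

noncomputable def policyValue : ∀ i : Fin (H + 1), S i → ℝ :=
  Fin.reverseInduction (fun _ => 0) fun h V x => ∑ b, μ h x b * (δ h x b + V (Pd h x b))

noncomputable def advantage (h : Fin H) (x : S h.castSucc) (b : A) : ℝ :=
  δ h x b + policyValue Pd μ δ h.succ (Pd h x b) - policyValue Pd μ δ h.castSucc x

@[simp] lemma policyValue_last (x : S (Fin.last H)) :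
    policyValue Pd μ δ (Fin.last H) x = 0 := by
  simp [policyValue]

lemma policyValue_castSucc (h : Fin H) (x : S h.castSucc) :
    policyValue Pd μ δ h.castSucc x =
      ∑ b, μ h x b * (δ h x b + policyValue Pd μ δ h.succ (Pd h x b)) := by
  simp [policyValue]

lemma sum_mul_advantage (hμ : ∀ h x, ∑ b, μ h x b = 1) (h : Fin H) (x : S h.castSucc) :
    ∑ b, μ h x b * advantage Pd μ δ h x b = 0 := by
  simp only [advantage, mul_sub, Finset.sum_sub_distrib, ← Finset.sum_mul, hμ, one_mul,
    policyValue_castSucc, sub_self]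

lemma sum_eq_policyValue_add_sum_advantage {s : ∀ i, S i} {a : Fin H → A}
    (hadm : IsAdmissible Pd s a) :
    ∑ h, δ h (s h.castSucc) (a h) =
      policyValue Pd μ δ 0 (s 0) + ∑ h, advantage Pd μ δ h (s h.castSucc) (a h) := by
  have htel := sum_succ_sub_castSucc fun i => policyValue Pd μ δ i (s i)
  simp only [policyValue_last, zero_sub] at htel
  simp only [advantage, ← hadm, add_sub_assoc, Finset.sum_add_distrib, htel]
  ring

end Advantage

section ChangeOfMeasure

variable {Pd : ∀ h : Fin H, S h.castSucc → A → S h.succ} {ρ : S 0 → ℝ}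
  {π μ : ∀ h : Fin H, S h.castSucc → A → ℝ} [Nonempty A]

lemma expTraj_eq_of_eq_sum (hπ : ∀ h x, ∑ b, π h x b = 1)
    (δ : ∀ h : Fin H, S h.castSucc → A → ℝ) {F : (∀ i, S i) → (Fin H → A) → ℝ}
    (hF : ∀ s a, IsAdmissible Pd s a → F s a = ∑ h, δ h (s h.castSucc) (a h)) :
    expTraj ρ (detKernel Pd) π F =
      ∑ x, ρ x * policyValue Pd μ δ 0 x + ∑ h, ∑ x : S h.castSucc × A,
        occ ρ (detKernel Pd) π h x.1 x.2 * advantage Pd μ δ h x.1 x.2 := by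
  rw [expTraj_detKernel_congr fun s a hadm => (hF s a hadm).trans
      (sum_eq_policyValue_add_sum_advantage Pd μ δ hadm),
    expTraj_add, expTraj_detKernel_comp_zero hπ, expTraj_sum]
  simp_rw [sum_occ_mul]

lemma sum_occ_mul_advantage_eq_zero (hμ : ∀ h x, ∑ b, μ h x b = 1)
    (δ : ∀ h : Fin H, S h.castSucc → A → ℝ) (h : Fin H) :
    ∑ x : S h.castSucc × A,
      occ ρ (detKernel Pd) μ h x.1 x.2 * advantage Pd μ δ h x.1 x.2 = 0 := by
  rw [sum_occ_mul]
  simpa using expTraj_detKernel_mul_step_eq_zero (ρ := ρ) (f := fun _ _ => 1) hμ h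
    (fun _ _ _ _ => rfl) (sum_mul_advantage Pd μ δ hμ h)

lemma expTraj_advantage_mul_advantage_eq_zero (hμ : ∀ h x, ∑ b, μ h x b = 1)
    (δ : ∀ h : Fin H, S h.castSucc → A → ℝ) {h k : Fin H} (hhk : h < k) :
    expTraj ρ (detKernel Pd) μ (fun s a =>
      advantage Pd μ δ h (s h.castSucc) (a h) * advantage Pd μ δ k (s k.castSucc) (a k)) = 0 :=
  expTraj_detKernel_mul_step_eq_zero hμ k
    (fun s₁ a a' haa' => congrArg₂ (advantage Pd μ δ h)
      (dependsOnFirst_rollout Pd s₁ h.castSucc a a' fun j hj => haa' j (by simp at hj; omega))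
      (haa' h hhk))
    (sum_mul_advantage Pd μ δ hμ k)

lemma expTraj_sq_eq_of_eq_sum (hμ : ∀ h x, ∑ b, μ h x b = 1)
    (δ : ∀ h : Fin H, S h.castSucc → A → ℝ) {F : (∀ i, S i) → (Fin H → A) → ℝ}
    (hF : ∀ s a, IsAdmissible Pd s a → F s a = ∑ h, δ h (s h.castSucc) (a h)) :
    expTraj ρ (detKernel Pd) μ (fun s a => F s a ^ 2) =
      ∑ x, ρ x * policyValue Pd μ δ 0 x ^ 2 +
        ∑ h, ∑ x : S h.castSucc × A,
          occ ρ (detKernel Pd) μ h x.1 x.2 * advantage Pd μ δ h x.1 x.2 ^ 2 := by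
  set V := policyValue Pd μ δ 0
  set Aμ := advantage Pd μ δ
  have hcross : ∀ k : Fin H, expTraj ρ (detKernel Pd) μ
      (fun s a => V (s 0) * Aμ k (s k.castSucc) (a k)) = 0 := fun k =>
    expTraj_detKernel_mul_step_eq_zero hμ k (fun _ _ _ _ => rfl)
      (sum_mul_advantage Pd μ δ hμ k)
  have hdiag : ∀ h k : Fin H, expTraj ρ (detKernel Pd) μ
      (fun s a => Aμ h (s h.castSucc) (a h) * Aμ k (s k.castSucc) (a k)) =
        if k = h then
          ∑ x : S h.castSucc × A, occ ρ (detKernel Pd) μ h x.1 x.2 * Aμ h x.1 x.2 ^ 2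
        else 0 := fun h k => by
    rcases lt_trichotomy h k with hhk | rfl | hkh
    · rw [if_neg hhk.ne', expTraj_advantage_mul_advantage_eq_zero hμ δ hhk]
    · rw [if_pos rfl, sum_occ_mul h fun x b => Aμ h x b ^ 2]
      simp only [sq]
    · simp_rw [if_neg hkh.ne, mul_comm (Aμ h _ _)]
      exact expTraj_advantage_mul_advantage_eq_zero hμ δ hkh
  have hsq : ∀ s a, IsAdmissible Pd s a → F s a ^ 2 =
      (V (s 0) ^ 2 + 2 * ∑ k, V (s 0) * Aμ k (s k.castSucc) (a k)) +
        ∑ h, ∑ k, Aμ h (s h.castSucc) (a h) * Aμ k (s k.castSucc) (a k) := fun s a hadm => by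
    rw [hF s a hadm, sum_eq_policyValue_add_sum_advantage Pd μ δ hadm, add_sq, ← Finset.mul_sum,
      sq (∑ h, _), Finset.sum_mul_sum]
    ring
  rw [expTraj_detKernel_congr hsq, expTraj_add, expTraj_add, expTraj_const_mul,
    expTraj_detKernel_comp_zero hμ fun x => V x ^ 2, expTraj_sum, expTraj_sum]
  simp [hcross, expTraj_sum, hdiag]

theorem abs_expTraj_le_of_eq_sum (hρ : IsPMF ρ) (hμ : ∀ h x, ∑ b, μ h x b = 1)
    (hsupp : ∀ h x b, 0 < occ ρ (detKernel Pd) μ h x b) (hπ : ∀ h x, ∑ b, π h x b = 1)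
    (δ : ∀ h : Fin H, S h.castSucc → A → ℝ) {F : (∀ i, S i) → (Fin H → A) → ℝ}
    (hF : ∀ s a, IsAdmissible Pd s a → F s a = ∑ h, δ h (s h.castSucc) (a h)) :
    |expTraj ρ (detKernel Pd) π F| ≤
      √((1 + ∑ h : Fin H,
          chiSq (fun x : S h.castSucc × A => occ ρ (detKernel Pd) π h x.1 x.2)
            (fun x : S h.castSucc × A => occ ρ (detKernel Pd) μ h x.1 x.2)) *
        expTraj ρ (detKernel Pd) μ (fun s a => F s a ^ 2)) := by
  rw [expTraj_eq_of_eq_sum hπ δ hF, expTraj_sq_eq_of_eq_sum hμ δ hF]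
  set V := policyValue Pd μ δ 0
  set Aμ := advantage Pd μ δ
  set χ := fun h : Fin H =>
    chiSq (fun x : S h.castSucc × A => occ ρ (detKernel Pd) π h x.1 x.2)
      (fun x : S h.castSucc × A => occ ρ (detKernel Pd) μ h x.1 x.2)
  set σ := fun h : Fin H =>
    ∑ x : S h.castSucc × A, occ ρ (detKernel Pd) μ h x.1 x.2 * Aμ h x.1 x.2 ^ 2
  have hχ : ∀ h, 0 ≤ χ h := fun h => chiSq_nonneg (fun x => hsupp h x.1 x.2)
    (sum_occ_detKernel_eq_one hρ.2 hπ h) (sum_occ_detKernel_eq_one hρ.2 hμ h)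
  have hσ : ∀ h, 0 ≤ σ h := fun h =>
    Finset.sum_nonneg fun x _ => mul_nonneg (hsupp h x.1 x.2).le (sq_nonneg _)
  have hstep : ∀ h,
      |∑ x : S h.castSucc × A, occ ρ (detKernel Pd) π h x.1 x.2 * Aμ h x.1 x.2| ≤
        √(χ h) * √(σ h) := fun h => by
    have hcentered :
        ∑ x : S h.castSucc × A, occ ρ (detKernel Pd) μ h x.1 x.2 * Aμ h x.1 x.2 = 0 :=
      sum_occ_mul_advantage_eq_zero hμ δ h
    rw [← sub_zero (∑ x : S h.castSucc × A, _), ← hcentered, ← Finset.sum_sub_distrib]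
    simp_rw [← sub_mul]
    exact abs_sum_sub_mul_le (fun x => hsupp h x.1 x.2) (sum_occ_detKernel_eq_one hρ.2 hπ h)
      (sum_occ_detKernel_eq_one hρ.2 hμ h)
  rw [Real.sqrt_mul (add_nonneg zero_le_one (Finset.sum_nonneg fun h _ => hχ h))]
  calc _ ≤ 1 * √(∑ x, ρ x * V x ^ 2) + ∑ h, √(χ h) * √(σ h) :=
        (abs_add_le _ _).trans <| add_le_add (by simpa using abs_sum_mul_le_sqrt hρ.1 hρ.2)
          ((Finset.abs_sum_le_sum_abs _ _).trans (Finset.sum_le_sum fun h _ => hstep h))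
    _ ≤ √(1 ^ 2 + ∑ h, √(χ h) ^ 2) *
          √(√(∑ x, ρ x * V x ^ 2) ^ 2 + ∑ h, √(σ h) ^ 2) :=
        add_sum_mul_le_sqrt_mul_sqrt _ _ _ _
    _ = _ := by
        simp_rw [one_pow, Real.sq_sqrt (hχ _), Real.sq_sqrt (hσ _),
          Real.sq_sqrt (Finset.sum_nonneg fun x _ => mul_nonneg (hρ.1 x) (sq_nonneg _))]

end ChangeOfMeasure

section SoftBellman

variable {Q : ∀ h : Fin H, S h.castSucc → A → ℝ}

lemma log_softmaxPolicy (h : Fin H) (x : S h.castSucc) (b : A) :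
    Real.log (softmaxPolicy Q h x b) = Q h x b - VQ Q h.castSucc x :=
  Real.log_exp _

lemma isPMF_softmaxPolicy [Nonempty A] (h : Fin H) (x : S h.castSucc) :
    IsPMF (softmaxPolicy Q h x) := by
  refine ⟨fun _ => (Real.exp_pos _).le, ?_⟩
  have hpos : 0 < ∑ b, Real.exp (Q h x b) :=
    Finset.sum_pos (fun _ _ => Real.exp_pos _) Finset.univ_nonempty
  simp only [softmaxPolicy, VQ, Fin.lastCases_castSucc, Real.exp_sub, Real.exp_log hpos,
    ← Finset.sum_div, div_self hpos.ne']

variable {πref r : ∀ h : Fin H, S h.castSucc → A → ℝ} {β : ℝ}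

lemma trajResidual_eq_log_softmaxPolicy (hH : 0 < H) (s : ∀ i, S i) (a : Fin H → A) :
    trajResidual hH πref r β Q (fun h => s h.castSucc) a =
      VQ Q 0 (s 0) + ∑ h, Real.log (softmaxPolicy Q h (s h.castSucc) (a h)) -
        ∑ h, shiftedR πref r β h (s h.castSucc) (a h) := by
  have hite : ∀ X : Fin H → ℝ,
      ∑ h, (if h = ⟨0, hH⟩ then 0 else X h) = ∑ h, X h - X ⟨0, hH⟩ := fun X => by
    simp [Finset.sum_ite, Finset.filter_ne', Finset.sum_erase_eq_sub]
  have h0 : VQ Q (⟨0, hH⟩ : Fin H).castSucc (s (⟨0, hH⟩ : Fin H).castSucc) = VQ Q 0 (s 0) :=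
    rfl
  simp only [trajResidual, log_softmaxPolicy, hite]
  linarith

@[simp] lemma VQ_last (x : S (Fin.last H)) : VQ Q (Fin.last H) x = 0 := by
  simp [VQ]

lemma trajResidual_eq_sum_sub_ToptDet (hH : 0 < H)
    {Pd : ∀ h : Fin H, S h.castSucc → A → S h.succ} {s : ∀ i, S i} {a : Fin H → A}
    (hadm : IsAdmissible Pd s a) :
    trajResidual hH πref r β Q (fun h => s h.castSucc) a =
      ∑ h, (Q h (s h.castSucc) (a h) - ToptDet Pd πref r β Q h (s h.castSucc) (a h)) := by
  have htel := sum_succ_sub_castSucc fun i => VQ Q i (s i)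
  simp only [VQ_last] at htel
  simp only [trajResidual_eq_log_softmaxPolicy, log_softmaxPolicy, ToptDet, ← hadm,
    Finset.sum_sub_distrib, Finset.sum_add_distrib] at htel ⊢
  linarith

variable {ρ : S 0 → ℝ} {P : ∀ h : Fin H, S h.castSucc → A → S h.succ → ℝ}
  {π : ∀ h : Fin H, S h.castSucc → A → ℝ}

lemma KLret_eq (hH : 0 < H) (hβ : β ≠ 0) (hπref : ∀ h x b, 0 < πref h x b)
    (Q : ∀ h : Fin H, S h.castSucc → A → ℝ) :
    KLret ρ P πref r β π = β * (expTraj ρ P π (fun s _ => VQ Q 0 (s 0)) -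
      expTraj ρ P π (fun s a => trajResidual hH πref r β Q (fun h => s h.castSucc) a) +
      ∑ h, expTraj ρ P π (fun s a => Real.log (softmaxPolicy Q h (s h.castSucc) (a h)) -
        Real.log (π h (s h.castSucc) (a h)))) := by
  rw [← expTraj_sum, ← expTraj_sub, ← expTraj_add, ← expTraj_const_mul]
  refine expTraj_congr fun s a hs => ?_
  have hterm : ∀ h : Fin H, r h (s h.castSucc) (a h) -
      β * Real.log (π h (s h.castSucc) (a h) / πref h (s h.castSucc) (a h)) =
        β * (shiftedR πref r β h (s h.castSucc) (a h) - Real.log (π h (s h.castSucc) (a h))) :=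
    fun h => by
      rw [shiftedR, Real.log_div (policy_ne_zero_of_trajDensity_ne_zero hs h) (hπref _ _ _).ne']
      field_simp
      ring
  simp only [hterm, ← Finset.mul_sum, trajResidual_eq_log_softmaxPolicy, Finset.sum_sub_distrib]
  ring

end SoftBellman

section PerformanceGap

variable {Pd : ∀ h : Fin H, S h.castSucc → A → S h.succ} {ρ : S 0 → ℝ}
  {πref r Q : ∀ h : Fin H, S h.castSucc → A → ℝ} {β : ℝ} [Nonempty A]

lemma KLret_le (hH : 0 < H) (hρ : ∀ x, 0 ≤ ρ x) (hβ : 0 < β)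
    (hπref : ∀ h x b, 0 < πref h x b) {π : ∀ h : Fin H, S h.castSucc → A → ℝ}
    (hπ : ∀ h x, IsPMF (π h x)) :
    KLret ρ (detKernel Pd) πref r β π ≤ β * (∑ x, ρ x * VQ Q 0 x -
      expTraj ρ (detKernel Pd) π
        (fun s a => trajResidual hH πref r β Q (fun h => s h.castSucc) a)) := by
  have hKL : ∑ h, expTraj ρ (detKernel Pd) π (fun s a =>
      Real.log (softmaxPolicy Q h (s h.castSucc) (a h)) -
        Real.log (π h (s h.castSucc) (a h))) ≤ 0 :=
    Finset.sum_nonpos fun h _ => expTraj_detKernel_step_nonpos hρ hπ h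
      (ψ := fun x b => Real.log (softmaxPolicy Q h x b) - Real.log (π h x b)) fun x =>
        sum_mul_log_sub_log_nonpos (hπ h x).1 (fun _ => Real.exp_pos _)
          (by rw [(isPMF_softmaxPolicy h x).2, (hπ h x).2])
  rw [KLret_eq hH hβ.ne' hπref Q, expTraj_detKernel_comp_zero fun h x => (hπ h x).2]
  exact mul_le_mul_of_nonneg_left (by linarith) hβ.le

lemma KLret_softmaxPolicy (hH : 0 < H) (hβ : β ≠ 0) (hπref : ∀ h x b, 0 < πref h x b) :
    KLret ρ (detKernel Pd) πref r β (softmaxPolicy Q) = β * (∑ x, ρ x * VQ Q 0 x -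
      expTraj ρ (detKernel Pd) (softmaxPolicy Q)
        (fun s a => trajResidual hH πref r β Q (fun h => s h.castSucc) a)) := by
  rw [KLret_eq hH hβ hπref Q,
    expTraj_detKernel_comp_zero fun h x => (isPMF_softmaxPolicy h x).2]
  simp [expTraj]

theorem KLret_sub_KLret_softmaxPolicy_le (hH : 0 < H) (hρ : ∀ x, 0 ≤ ρ x) (hβ : 0 < β)
    (hπref : ∀ h x b, 0 < πref h x b) {π : ∀ h : Fin H, S h.castSucc → A → ℝ}
    (hπ : ∀ h x, IsPMF (π h x)) :
    KLret ρ (detKernel Pd) πref r β π - KLret ρ (detKernel Pd) πref r β (softmaxPolicy Q) ≤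
      β * (expTraj ρ (detKernel Pd) (softmaxPolicy Q)
          (fun s a => trajResidual hH πref r β Q (fun h => s h.castSucc) a) -
        expTraj ρ (detKernel Pd) π
          (fun s a => trajResidual hH πref r β Q (fun h => s h.castSucc) a)) := by
  rw [KLret_softmaxPolicy hH hβ.ne' hπref]
  linarith [KLret_le (Pd := Pd) (Q := Q) (r := r) hH hρ hβ hπref hπ]

end PerformanceGap

theorem tbrm_population_guarantee_general
    (hH : 0 < H) [Nonempty A]
    (ρ : S 0 → ℝ) (hρ : IsPMF ρ)
    (Pd : ∀ h : Fin H, S h.castSucc → A → S h.succ)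
    (r : ∀ h : Fin H, S h.castSucc → A → ℝ)
    (πref : ∀ h : Fin H, S h.castSucc → A → ℝ)
    (hπrefpos : ∀ h s a, 0 < πref h s a)
    (β : ℝ) (hβ : 0 < β)
    (μ : ∀ h : Fin H, S h.castSucc → A → ℝ) (hμ : ∀ h s, IsPMF (μ h s))
    (hsupp : ∀ (h : Fin H) (s : S h.castSucc) (a : A),
      0 < occ ρ (detKernel Pd) μ h s a)
    (Q : ∀ h : Fin H, S h.castSucc → A → ℝ)
    (πdag : ∀ h : Fin H, S h.castSucc → A → ℝ)
    (hπdag : ∀ h s, IsPMF (πdag h s)) :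
    KLret ρ (detKernel Pd) πref r β πdag
        - KLret ρ (detKernel Pd) πref r β (softmaxPolicy Q) ≤
      2 * β * max
        (Real.sqrt
          ((1 + ∑ h : Fin H,
              chiSq (fun x : S h.castSucc × A => occ ρ (detKernel Pd) πdag h x.1 x.2)
                    (fun x : S h.castSucc × A => occ ρ (detKernel Pd) μ h x.1 x.2)) *
            expTraj ρ (detKernel Pd) μ
              (fun s a => (trajResidual hH πref r β Q (fun h => s h.castSucc) a) ^ 2)))
        (Real.sqrt
          ((1 + ∑ h : Fin H,
              chiSq (fun x : S h.castSucc × A =>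
                      occ ρ (detKernel Pd) (softmaxPolicy Q) h x.1 x.2)
                    (fun x : S h.castSucc × A => occ ρ (detKernel Pd) μ h x.1 x.2)) *
            expTraj ρ (detKernel Pd) μ
              (fun s a => (trajResidual hH πref r β Q (fun h => s h.castSucc) a) ^ 2))) := by
  have hgap := KLret_sub_KLret_softmaxPolicy_le (Pd := Pd) (Q := Q) (r := r) hH hρ.1 hβ
    hπrefpos hπdag
  have hbound := fun {π : ∀ h : Fin H, S h.castSucc → A → ℝ}
      (hπ : ∀ h x, IsPMF (π h x)) =>
    abs_expTraj_le_of_eq_sum hρ (fun h x => (hμ h x).2) hsupp (fun h x => (hπ h x).2)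
      (fun h x b => Q h x b - ToptDet Pd πref r β Q h x b)
      fun _ _ hadm => trajResidual_eq_sum_sub_ToptDet hH hadm
  have hdag := hbound hπdag
  have hhat := hbound (isPMF_softmaxPolicy (Q := Q))
  refine hgap.trans ?_
  rw [mul_comm 2 β, mul_assoc]
  refine mul_le_mul_of_nonneg_left ?_ hβ.le
  exact sub_le_two_mul_max_of_abs_le hhat hdag

/-- **Population-level TBRM guarantee (deterministic core of the main theorem).** In a
deterministic MDP, for any behavior policy `μ` with full-support occupancy measures, any
`Q` with softmax policy `π̂ := π_Q`, and any comparator policy `π†`,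
`J_β(π†) − J_β(π̂) ≤ 2β · max_{π∈{π†,π̂}} √((1 + Σ_h χ²(d_h^π‖d_h^μ)) · E_μ[f_Q(τ)²])`. -/
theorem tbrm_population_guarantee
    (hH : 0 < H) [∀ i, Nonempty (S i)] [Nonempty A]
    (ρ : S 0 → ℝ) (hρ : IsPMF ρ)
    (Pd : ∀ h : Fin H, S h.castSucc → A → S h.succ)
    (r : ∀ h : Fin H, S h.castSucc → A → ℝ)
    (πref : ∀ h : Fin H, S h.castSucc → A → ℝ)
    (hπref : ∀ h s, IsPMF (πref h s)) (hπrefpos : ∀ h s a, 0 < πref h s a)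
    (β : ℝ) (hβ : 0 < β)
    (μ : ∀ h : Fin H, S h.castSucc → A → ℝ) (hμ : ∀ h s, IsPMF (μ h s))
    (hsupp : ∀ (h : Fin H) (s : S h.castSucc) (a : A),
      0 < occ ρ (detKernel Pd) μ h s a)
    (Q : ∀ h : Fin H, S h.castSucc → A → ℝ)
    (πdag : ∀ h : Fin H, S h.castSucc → A → ℝ)
    (hπdag : ∀ h s, IsPMF (πdag h s)) :
    KLret ρ (detKernel Pd) πref r β πdag
        - KLret ρ (detKernel Pd) πref r β (softmaxPolicy Q) ≤
      2 * β * max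
        (Real.sqrt
          ((1 + ∑ h : Fin H,
              chiSq (fun x : S h.castSucc × A => occ ρ (detKernel Pd) πdag h x.1 x.2)
                    (fun x : S h.castSucc × A => occ ρ (detKernel Pd) μ h x.1 x.2)) *
            expTraj ρ (detKernel Pd) μ
              (fun s a => (trajResidual hH πref r β Q (fun h => s h.castSucc) a) ^ 2)))
        (Real.sqrt
          ((1 + ∑ h : Fin H,
              chiSq (fun x : S h.castSucc × A =>
                      occ ρ (detKernel Pd) (softmaxPolicy Q) h x.1 x.2)
                    (fun x : S h.castSucc × A => occ ρ (detKernel Pd) μ h x.1 x.2)) *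
            expTraj ρ (detKernel Pd) μ
              (fun s a => (trajResidual hH πref r β Q (fun h => s h.castSucc) a) ^ 2))) :=
  tbrm_population_guarantee_general hH ρ hρ Pd r πref hπrefpos β hβ μ hμ hsupp Q πdag hπdag

end TBRM
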